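/- In the polynomial ring C[x_0, x_1, x_2, ...] with involution θ(x_i) = -x_i, the invariant algebra is generated (as a commutative algebra) by the quadratic monomials q_{i,j} = x_i x_j for i ≥ j ≥ 0, and every algebraic relation among the q_{i,j} is a consequence of the quadratic relations q_{i,j} q_{k,ℓ} - q_{i,ℓ} q_{k,j} = 0. -/

import Mathlib

/-!
STATEMENT 1: In `A = ℂ[x₀, x₁, ...]` with the involution `θ(xᵢ) = -xᵢ`, the invariant
algebra `A^θ` is generated as a commutative algebra by the quadratics `q_{i,j} = xᵢ xⱼ`,
and the kernel of the surjection from the polynomial ring on symbols `Q_{i,j}` (i ≥ j)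
onto `A^θ`, `Q_{i,j} ↦ q_{i,j}`, is generated by the quadratic relations
`Q_{i,j} Q_{k,ℓ} - Q_{i,ℓ} Q_{k,j}` (with `Q_{a,b}` interpreted as `Q_{b,a}` if a < b).
-/

noncomputable section

open MvPolynomial

/-- The involution `θ` with `θ(xᵢ) = -xᵢ`. -/
def theta : MvPolynomial ℕ ℂ →ₐ[ℂ] MvPolynomial ℕ ℂ :=
  MvPolynomial.aeval (fun i => -MvPolynomial.X i)

/-- The invariant subalgebra `A^θ`. -/
def invariants : Subalgebra ℂ (MvPolynomial ℕ ℂ) :=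
  AlgHom.equalizer theta (AlgHom.id ℂ (MvPolynomial ℕ ℂ))

/-- The polynomial ring on symbols `Q_{i,j}` indexed by pairs with `j ≤ i`. -/
abbrev QRing := MvPolynomial {p : ℕ × ℕ // p.2 ≤ p.1} ℂ

/-- The symbol `Q_{a,b}`, symmetrized: `Q_{a,b} = Q_{b,a}`. -/
def Qsym (a b : ℕ) : QRing :=
  if h : b ≤ a then MvPolynomial.X ⟨(a, b), h⟩
  else MvPolynomial.X ⟨(b, a), le_of_not_ge h⟩

/-- The map `Q_{i,j} ↦ xᵢ xⱼ`. -/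
def toInv : QRing →ₐ[ℂ] MvPolynomial ℕ ℂ :=
  MvPolynomial.aeval (fun p => MvPolynomial.X p.1.1 * MvPolynomial.X p.1.2)

/-! `θ` multiplies a monomial of degree `d` by `(-1)^d`, so the invariants are spanned by the
monomials of even degree, and these are products of the `xᵢ xⱼ`.

`Q ↦ q` sends monomials to monomials, so its kernel is spanned by differences of `Q`-monomials
with the same image. Such a pair of monomials consists of two ways of grouping one multiset of
indices into pairs, and one grouping is turned into the other by exchanges
`Q_{i,j} Q_{k,ℓ} ↦ Q_{i,k} Q_{j,ℓ}`, each of which is a determinantal relation. -/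

section PairEntries

variable {α M : Type*}

def pairEntries (s : Multiset (α × α)) : Multiset α := s.bind fun p => {p.1, p.2}

lemma pairEntries_cons (p : α × α) (s : Multiset (α × α)) :
    pairEntries (p ::ₘ s) = p.1 ::ₘ p.2 ::ₘ pairEntries s := by
  simp only [pairEntries, Multiset.cons_bind, Multiset.insert_eq_cons, Multiset.cons_add,
    Multiset.singleton_add]

lemma mem_pairEntries {a : α} {s : Multiset (α × α)} :
    a ∈ pairEntries s ↔ ∃ p ∈ s, a = p.1 ∨ a = p.2 := by
  simp only [pairEntries, Multiset.mem_bind, Multiset.insert_eq_cons, Multiset.mem_cons,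
    Multiset.mem_singleton]

lemma prod_map_pairEntries [CommMonoid M] (f : α → M) (s : Multiset (α × α)) :
    ((pairEntries s).map f).prod = (s.map fun p => f p.1 * f p.2).prod := by
  induction s using Multiset.induction with
  | empty => simp [pairEntries]
  | cons p s ih => simp [pairEntries_cons, ih, mul_assoc]

variable [CommMonoid M] {q : α → α → M}

lemma exists_cons_pairEntries_of_mem (hq : ∀ a b, q a b = q b a) {a : α}
    {t : Multiset (α × α)} (ha : a ∈ pairEntries t) :
    ∃ b t', pairEntries t = a ::ₘ b ::ₘ pairEntries t' ∧
      (t.map fun p => q p.1 p.2).prod = q a b * (t'.map fun p => q p.1 p.2).prod := by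
  obtain ⟨⟨c, d⟩, hp, rfl | rfl⟩ := mem_pairEntries.mp ha <;>
    obtain ⟨t', rfl⟩ := Multiset.exists_cons_of_mem hp
  · exact ⟨d, t', pairEntries_cons _ _, by simp⟩
  · exact ⟨c, t', by rw [pairEntries_cons, Multiset.cons_swap], by simp [hq c]⟩

theorem prod_map_eq_of_pairEntries_eq (hq : ∀ a b, q a b = q b a)
    (hexch : ∀ i j k l, q i j * q k l = q i l * q k j) {s t : Multiset (α × α)}
    (h : pairEntries s = pairEntries t) :
    (s.map fun p => q p.1 p.2).prod = (t.map fun p => q p.1 p.2).prod := by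
  induction s using Multiset.induction generalizing t with
  | empty =>
    rcases Multiset.empty_or_exists_mem t with rfl | ⟨p, hp⟩
    · rfl
    · have : p.1 ∈ pairEntries t := mem_pairEntries.mpr ⟨p, hp, .inl rfl⟩
      rw [← h] at this
      simp [pairEntries] at this
  | cons p s ih =>
    obtain ⟨i, j⟩ := p
    rw [pairEntries_cons] at h
    obtain ⟨k, t₁, ht, hprod⟩ :=
      exists_cons_pairEntries_of_mem hq (h ▸ Multiset.mem_cons_self i _)
    rw [ht, Multiset.cons_inj_right] at h
    rw [Multiset.map_cons, Multiset.prod_cons, hprod]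
    by_cases hjk : j = k
    · subst hjk
      rw [ih ((Multiset.cons_inj_right j).mp h)]
    · obtain ⟨l, t₂, ht₁, hprod₁⟩ := exists_cons_pairEntries_of_mem hq
        ((Multiset.mem_cons.mp (h ▸ Multiset.mem_cons_self j _)).resolve_left hjk)
      have hs : pairEntries s = pairEntries ((k, l) ::ₘ t₂) := by
        rw [pairEntries_cons, ← Multiset.cons_inj_right j, h, ht₁, Multiset.cons_swap]
      rw [ih hs, hprod₁, Multiset.map_cons, Multiset.prod_cons, ← mul_assoc, ← mul_assoc,
        hq k l, hexch, hq l j]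

end PairEntries

namespace MvPolynomial

variable {R σ τ : Type*}

section CommSemiring

variable [CommSemiring R]

lemma prod_map_X_toMultiset (v : σ →₀ ℕ) :
    (v.toMultiset.map X).prod = monomial v (1 : R) := by
  rw [Finsupp.toMultiset_map, Finsupp.prod_toMultiset,
    Finsupp.prod_mapDomain_index (fun _ => pow_zero _) (fun _ _ _ => pow_add _ _ _),
    monomial_eq, C_1, one_mul]

lemma prod_map_X [DecidableEq σ] (s : Multiset σ) :
    (s.map X).prod = monomial (Multiset.toFinsupp s) (1 : R) := by
  rw [← prod_map_X_toMultiset, Multiset.toFinsupp_toMultiset]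

lemma prod_map_X_mem_of_even (A : Subalgebra R (MvPolynomial σ R))
    (hA : ∀ i j, X i * X j ∈ A) {s : Multiset σ} (hs : Even (Multiset.card s)) :
    (s.map X).prod ∈ A := by
  suffices ∀ s : Multiset σ, (Even (Multiset.card s) → (s.map X).prod ∈ A) ∧
      (Odd (Multiset.card s) → ∀ i, X i * (s.map X).prod ∈ A) from (this s).1 hs
  intro s
  induction s using Multiset.induction with
  | empty => simp
  | cons j s ih =>
    simp only [Multiset.card_cons, Nat.even_add_one, Nat.odd_add_one, Nat.not_even_iff_odd,
      Nat.not_odd_iff_even, Multiset.map_cons, Multiset.prod_cons]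
    refine ⟨fun hodd => ih.2 hodd j, fun heven i => ?_⟩
    rw [← mul_assoc]
    exact mul_mem (hA i j) (ih.1 heven)

lemma mem_of_forall_monomial_mem (A : Subalgebra R (MvPolynomial σ R)) {p : MvPolynomial σ R}
    (h : ∀ v ∈ p.support, monomial v 1 ∈ A) : p ∈ A := by
  rw [p.as_sum]
  refine Subalgebra.sum_mem _ fun v hv => ?_
  rw [← mul_one (coeff v p), ← C_mul_monomial]
  exact mul_mem (Subalgebra.algebraMap_mem _ _) (h v hv)

end CommSemiring

section CommRing

variable [CommRing R]

lemma aeval_neg_X_monomial (v : σ →₀ ℕ) (c : R) :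
    aeval (fun i => -X i) (monomial v c) = monomial v ((-1) ^ Multiset.card v.toMultiset * c) := by
  have hneg : v.toMultiset.map (fun i => -X i) =
      (v.toMultiset.map X).map (Neg.neg : _ → MvPolynomial σ R) := by
    rw [Multiset.map_map]; rfl
  rw [← mul_one c, ← C_mul_monomial, ← prod_map_X_toMultiset, map_mul, aeval_C,
    map_multiset_prod, Multiset.map_map, Function.comp_def]
  simp only [aeval_X]
  rw [hneg, Multiset.prod_map_neg, Multiset.card_map, prod_map_X_toMultiset, algebraMap_eq,
    ← C_mul_monomial, ← C_mul_monomial, map_pow, map_neg, C_1]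
  ring

lemma coeff_aeval_neg_X (v : σ →₀ ℕ) (p : MvPolynomial σ R) :
    coeff v (aeval (fun i => -X i) p) = (-1) ^ Multiset.card v.toMultiset * coeff v p := by
  classical
  induction p using induction_on' with
  | monomial u c =>
    rw [aeval_neg_X_monomial, coeff_monomial, coeff_monomial]
    split_ifs with huv
    · rw [huv]
    · rw [mul_zero]
  | add p q hp hq => rw [map_add, coeff_add, coeff_add, hp, hq, mul_add]

lemma even_of_aeval_neg_X_eq_self [NoZeroDivisors R] [CharZero R] {p : MvPolynomial σ R}
    (hp : aeval (fun i => -X i) p = p) {v : σ →₀ ℕ} (hv : v ∈ p.support) :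
    Even (Multiset.card v.toMultiset) := by
  by_contra hodd
  have h := coeff_aeval_neg_X v p
  rw [hp, (Nat.not_even_iff_odd.mp hodd).neg_one_pow, neg_one_mul, eq_comm,
    CharZero.neg_eq_self_iff] at h
  exact mem_support_iff.mp hv h

theorem ker_le_of_monomial_fibers (φ : MvPolynomial τ R →ₐ[R] MvPolynomial σ R)
    (g : (τ →₀ ℕ) → σ →₀ ℕ) (hφ : ∀ e, φ (monomial e 1) = monomial (g e) 1)
    (J : Ideal (MvPolynomial τ R))
    (hJ : ∀ e e', g e = g e' → monomial e 1 - monomial e' 1 ∈ J) : RingHom.ker φ ≤ J := by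
  -- `π` factors through `φ`, via the linear map sending `monomial ν 1` to the class of any
  -- monomial of the fibre `g⁻¹ ν`.
  let π := Ideal.Quotient.mkₐ R J
  have hfac : Function.FactorsThrough (fun e => π (monomial e 1)) g := fun e e' h =>
    Ideal.Quotient.eq.mpr (hJ e e' h)
  let L := (basisMonomials σ R).constr R (Function.extend g (fun e => π (monomial e 1)) 0)
  have hL : L ∘ₗ φ.toLinearMap = π.toLinearMap := (basisMonomials τ R).ext fun e => by
    rw [LinearMap.comp_apply, AlgHom.toLinearMap_apply, AlgHom.toLinearMap_apply,
      congr_fun (coe_basisMonomials τ R) e, hφ, ← congr_fun (coe_basisMonomials σ R),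
      Module.Basis.constr_basis, hfac.extend_apply]
  intro p hp
  rw [← Ideal.Quotient.eq_zero_iff_mem, ← Ideal.Quotient.mkₐ_eq_mk R]
  change π.toLinearMap p = 0
  rw [← hL, LinearMap.comp_apply, AlgHom.toLinearMap_apply, RingHom.mem_ker.mp hp, map_zero]

end CommRing

end MvPolynomial

lemma mem_invariants_iff {p : MvPolynomial ℕ ℂ} : p ∈ invariants ↔ theta p = p :=
  AlgHom.mem_equalizer _ _ _

lemma adjoin_quadratics_eq_invariants :
    Algebra.adjoin ℂ {q : MvPolynomial ℕ ℂ | ∃ i j : ℕ, j ≤ i ∧ q = X i * X j} =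
      invariants := by
  refine le_antisymm (Algebra.adjoin_le ?_) fun p hp => ?_
  · rintro _ ⟨i, j, -, rfl⟩
    simp [mem_invariants_iff, theta]
  · refine mem_of_forall_monomial_mem _ fun v hv => ?_
    rw [← prod_map_X_toMultiset]
    refine prod_map_X_mem_of_even _ (fun i j => Algebra.subset_adjoin ?_)
      (even_of_aeval_neg_X_eq_self (mem_invariants_iff.mp hp) hv)
    rcases le_total j i with hji | hij
    · exact ⟨i, j, hji, rfl⟩
    · exact ⟨j, i, hij, mul_comm _ _⟩

lemma Qsym_comm (a b : ℕ) : Qsym a b = Qsym b a := by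
  unfold Qsym
  split_ifs with hba hab hab
  · obtain rfl := le_antisymm hab hba
    rfl
  · rfl
  · rfl
  · omega

lemma X_eq_Qsym (p : {p : ℕ × ℕ // p.2 ≤ p.1}) : (X p : QRing) = Qsym p.1.1 p.1.2 := by
  simp [Qsym, p.2]

lemma toInv_Qsym (a b : ℕ) : toInv (Qsym a b) = X a * X b := by
  unfold Qsym toInv
  split_ifs
  · rw [aeval_X]
  · rw [aeval_X, mul_comm]

lemma monomial_one_eq_prod_Qsym (e : {p : ℕ × ℕ // p.2 ≤ p.1} →₀ ℕ) :
    (monomial e 1 : QRing) = ((e.toMultiset.map Subtype.val).map fun p => Qsym p.1 p.2).prod := by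
  rw [← prod_map_X_toMultiset, Multiset.map_map]
  exact congrArg Multiset.prod (Multiset.map_congr rfl fun p _ => X_eq_Qsym p)

lemma toInv_monomial_one (e : {p : ℕ × ℕ // p.2 ≤ p.1} →₀ ℕ) :
    toInv (monomial e 1) = monomial (pairEntries (e.toMultiset.map Subtype.val)).toFinsupp 1 := by
  rw [monomial_one_eq_prod_Qsym, map_multiset_prod, Multiset.map_map, ← prod_map_X,
    prod_map_pairEntries]
  exact congrArg Multiset.prod (Multiset.map_congr rfl fun p _ => toInv_Qsym p.1 p.2)

def detIdeal : Ideal QRing :=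
  Ideal.span {r : QRing | ∃ i j k ℓ : ℕ, r = Qsym i j * Qsym k ℓ - Qsym i ℓ * Qsym k j}

lemma monomial_one_sub_mem_detIdeal {e e' : {p : ℕ × ℕ // p.2 ≤ p.1} →₀ ℕ}
    (h : pairEntries (e.toMultiset.map Subtype.val) = pairEntries (e'.toMultiset.map Subtype.val)) :
    monomial e 1 - monomial e' 1 ∈ detIdeal := by
  rw [← Ideal.Quotient.eq, monomial_one_eq_prod_Qsym, monomial_one_eq_prod_Qsym,
    map_multiset_prod, map_multiset_prod, Multiset.map_map (Ideal.Quotient.mk detIdeal),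
    Multiset.map_map (Ideal.Quotient.mk detIdeal)]
  refine prod_map_eq_of_pairEntries_eq (q := fun a b => Ideal.Quotient.mk detIdeal (Qsym a b))
    (fun a b => by rw [Qsym_comm]) (fun i j k l => ?_) h
  rw [← map_mul, ← map_mul, Ideal.Quotient.eq]
  exact Ideal.subset_span ⟨i, j, k, l, rfl⟩

lemma detIdeal_le_ker_toInv : detIdeal ≤ RingHom.ker toInv := by
  rw [detIdeal, Ideal.span_le]
  rintro _ ⟨i, j, k, l, rfl⟩
  rw [SetLike.mem_coe, RingHom.mem_ker, map_sub, map_mul, map_mul, toInv_Qsym, toInv_Qsym,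
    toInv_Qsym, toInv_Qsym]
  ring

lemma ker_toInv_eq_detIdeal : RingHom.ker toInv = detIdeal :=
  le_antisymm
    (ker_le_of_monomial_fibers toInv _ toInv_monomial_one detIdeal fun _ _ h =>
      monomial_one_sub_mem_detIdeal (Multiset.toFinsupp.injective h))
    detIdeal_le_ker_toInv

theorem invariants_generated_by_quadratics_with_determinantal_relations :
    (Algebra.adjoin ℂ
        {q : MvPolynomial ℕ ℂ | ∃ i j : ℕ, j ≤ i ∧ q = MvPolynomial.X i * MvPolynomial.X j}
      = invariants) ∧
    RingHom.ker (toInv : QRing →ₐ[ℂ] MvPolynomial ℕ ℂ)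
      = Ideal.span {r : QRing | ∃ i j k ℓ : ℕ,
          r = Qsym i j * Qsym k ℓ - Qsym i ℓ * Qsym k j} :=
  ⟨adjoin_quadratics_eq_invariants, ker_toInv_eq_detIdeal⟩

end
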